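/- arXiv:math/0406018 — 3 statements merged into one kernel-verified Lean document; each statement's English description precedes it below -/
import Mathlib

section
/- Suppose q ≤ x is a positive integer with h(q) > 6 and 𝒜(x) > 0. Then either |𝒜(x; q, 0) − (h(q)/q)·𝒜(x)| ≥ (1/2)·(h(q)/q)·𝒜(x), or for every prime ℓ with 3·(x + q)/h(q) ≤ ℓ ≤ x and ℓ ∤ q there is a residue class b (mod ℓ) such that |𝒜(x; ℓ, b) − (f_ℓ(b)/(ℓ·γ_ℓ))·𝒜(x)| ≥ (1/2)·(f_ℓ(b)/(ℓ·γ_ℓ))·𝒜(x). -/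
open scoped Classical

noncomputable section

/-- `𝒜(x) = Σ_{n ≤ x} a(n)`. -/
def Acal (a : ℕ → ℝ) (x : ℝ) : ℝ := ∑ n ∈ Finset.Icc 1 ⌊x⌋₊, a n

/-- `𝒜(x; q, b) = Σ_{n ≤ x, n ≡ b (mod q)} a(n)`. -/
def AcalMod (a : ℕ → ℝ) (x : ℝ) (q : ℕ) (b : ℤ) : ℝ :=
  ∑ n ∈ (Finset.Icc 1 ⌊x⌋₊).filter (fun n : ℕ => (n : ℤ) % (q : ℤ) = b % (q : ℤ)), a n

/-- `h` is multiplicative: `h(1) = 1` and `h(mn) = h(m)h(n)` for coprime `m, n`. -/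
def IsMultFun (h : ℕ → ℝ) : Prop :=
  h 1 = 1 ∧ ∀ m n : ℕ, Nat.Coprime m n → h (m * n) = h m * h n

/-- `γ_q = ∏_{p | q} (p - 1)/(p - h(p))`. -/
def gammaq (h : ℕ → ℝ) (q : ℕ) : ℝ :=
  ∏ p ∈ q.primeFactors, ((p : ℝ) - 1) / ((p : ℝ) - h p)

/-- The multiplicative function `f_q` evaluated at the integer `b`, i.e. at
`gcd(b, q)`:  `f_q(p^k) = 1` for `p ∤ q`; if `p^e ∥ q` then
`f_q(p^k) = (h(p^k) - h(p^{k+1})/p)/(1 - h(p)/p)` for `1 ≤ k < e` and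
`f_q(p^k) = h(p^e)(1 - 1/p)/(1 - h(p)/p)` for `k ≥ e`. -/
def fq (h : ℕ → ℝ) (q : ℕ) (b : ℤ) : ℝ :=
  ∏ p ∈ q.primeFactors,
    (if (Int.gcd b (q : ℤ)).factorization p = 0 then 1
     else if (Int.gcd b (q : ℤ)).factorization p < q.factorization p then
       (h (p ^ (Int.gcd b (q : ℤ)).factorization p) -
         h (p ^ ((Int.gcd b (q : ℤ)).factorization p + 1)) / (p : ℝ)) / (1 - h p / (p : ℝ))
     else h (p ^ q.factorization p) * (1 - 1 / (p : ℝ)) / (1 - h p / (p : ℝ)))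

/-- `Δ_q(x) = sup_{x/4 ≤ y ≤ x} max_{b (mod q)}
`|𝒜(y;q,b) − (f_q(b)/(qγ_q))·(y/x)·𝒜(x)| / (𝒜(x)/φ(q))`. -/
def Deltaq (a h : ℕ → ℝ) (q : ℕ) (x : ℝ) : ℝ :=
  sSup {d : ℝ | ∃ y : ℝ, ∃ b : ℤ, x / 4 ≤ y ∧ y ≤ x ∧
    d = |AcalMod a y q b - fq h q b / (q * gammaq h q) * (y / x) * Acal a x| /
      (Acal a x / (Nat.totient q : ℝ))}

/-- `Δ̃(y,x) = sup_{(v,v+y) ⊆ (x/4,x)} |𝒜(v+y) − 𝒜(v) − y·𝒜(x)/x| / (y·𝒜(x)/x)`. -/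
def DeltaTilde (a : ℕ → ℝ) (y x : ℝ) : ℝ :=
  sSup {d : ℝ | ∃ v : ℝ, x / 4 ≤ v ∧ v + y ≤ x ∧
    d = |Acal a (v + y) - Acal a v - y * Acal a x / x| / (y * Acal a x / x)}

open Finset

/-! If the multiples of `q` carry at least half of their expected mass `h(q)𝒜(x)/q`, then,
as there are at most `x/q` of them, a single one `n ≤ x` has `a(n) > h(q)𝒜(x)/(2x)`.
A prime `ℓ ∤ q` with `ℓ ≥ 3(x+q)/h(q)` cannot divide `n`, because `ℓq ≥ ℓh(q) > x`;
so `f_ℓ(n) = 1` and the expected mass of the class of `n` modulo `ℓ` is at most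
`𝒜(x)/(ℓ-1) ≤ h(q)𝒜(x)/(3x)`, which the single term `a(n)` exceeds by a factor `3/2`. -/

lemma IsMultFun.le_self {h : ℕ → ℝ} (hmul : IsMultFun h) (hnn : ∀ n, 0 ≤ h n)
    (hlt : ∀ p k : ℕ, Nat.Prime p → 1 ≤ k → h (p ^ k) < (p : ℝ) ^ k) {n : ℕ} (hn : 0 < n) :
    h n ≤ n := by
  induction n using Nat.recOnPrimePow with
  | zero => exact absurd hn (lt_irrefl 0)
  | one => simp [hmul.1]
  | prime_pow_mul m p k hp hpm hk ih =>
    have hcop : Nat.Coprime (p ^ k) m := ((hp.coprime_iff_not_dvd).2 hpm).pow_left k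
    rw [hmul.2 _ _ hcop, Nat.cast_mul, Nat.cast_pow]
    exact mul_le_mul (hlt p k hp hk).le (ih (Nat.pos_of_mul_pos_left hn)) (hnn m) (by positivity)

lemma AcalMod_zero_eq_sum_dvd (a : ℕ → ℝ) (x : ℝ) (q : ℕ) :
    AcalMod a x q 0 = ∑ n ∈ (Icc 1 ⌊x⌋₊).filter (q ∣ ·), a n := by
  unfold AcalMod
  congr 1
  ext n
  simp [Int.natCast_dvd_natCast]

lemma le_AcalMod_self {a : ℕ → ℝ} (ha : ∀ n, 0 ≤ a n) {x : ℝ} {n : ℕ}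
    (hn : n ∈ Icc 1 ⌊x⌋₊) (ℓ : ℕ) : a n ≤ AcalMod a x ℓ n :=
  single_le_sum (fun i _ => ha i) (mem_filter.2 ⟨hn, rfl⟩)

lemma exists_dvd_mul_AcalMod_zero_le {a : ℕ → ℝ} (ha : ∀ n, 0 ≤ a n) {x : ℝ} {q : ℕ}
    (hpos : 0 < AcalMod a x q 0) :
    ∃ n ∈ Icc 1 ⌊x⌋₊, q ∣ n ∧ q * AcalMod a x q 0 ≤ ⌊x⌋₊ * a n := by
  set S := (Icc 1 ⌊x⌋₊).filter (q ∣ ·)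
  rw [AcalMod_zero_eq_sum_dvd] at hpos ⊢
  obtain ⟨n, hnS, hmax⟩ := exists_max_image S a (nonempty_of_sum_ne_zero hpos.ne')
  have hcard : q * #S ≤ ⌊x⌋₊ := by
    rw [show S = (Ioc 0 ⌊x⌋₊).filter (q ∣ ·) from rfl, Nat.Ioc_filter_dvd_card_eq_div]
    exact Nat.mul_div_le _ _
  obtain ⟨hn, hqn⟩ := mem_filter.1 hnS
  refine ⟨n, hn, hqn, ?_⟩
  calc (q : ℝ) * ∑ m ∈ S, a m ≤ q * (#S * a n) := by
        gcongr
        simpa using sum_le_card_nsmul S a (a n) hmax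
    _ = ((q * #S : ℕ) : ℝ) * a n := by push_cast; ring
    _ ≤ ⌊x⌋₊ * a n := by gcongr; exact ha n

lemma fq_eq_one_of_gcd_eq_one (h : ℕ → ℝ) {q : ℕ} {b : ℤ} (hb : Int.gcd b q = 1) :
    fq h q b = 1 := by
  simp [fq, hb]

lemma gammaq_prime (h : ℕ → ℝ) {ℓ : ℕ} (hℓ : ℓ.Prime) :
    gammaq h ℓ = ((ℓ : ℝ) - 1) / (ℓ - h ℓ) := by
  rw [gammaq, hℓ.primeFactors, prod_singleton]

lemma one_div_mul_gammaq_prime_le {h : ℕ → ℝ} {ℓ : ℕ} (hℓ : ℓ.Prime) (h0 : 0 ≤ h ℓ) :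
    1 / (ℓ * gammaq h ℓ) ≤ 1 / ((ℓ : ℝ) - 1) := by
  have hℓ1 : (1 : ℝ) < ℓ := by exact_mod_cast hℓ.one_lt
  rw [gammaq_prime h hℓ, mul_div_assoc', one_div_div,
    div_le_div_iff₀ (by positivity) (by linarith)]
  nlinarith

lemma le_abs_AcalMod_prime_sub {a h : ℕ → ℝ} (ha : ∀ n, 0 ≤ a n) {x : ℝ} {ℓ n : ℕ}
    (hℓ : ℓ.Prime) (h0 : 0 ≤ h ℓ) (hn : n ∈ Icc 1 ⌊x⌋₊) (hℓn : ¬ ℓ ∣ n)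
    (hheavy : 3 * Acal a x < 2 * ((ℓ : ℝ) - 1) * a n) :
    1 / 2 * (fq h ℓ n / (ℓ * gammaq h ℓ)) * Acal a x ≤
      |AcalMod a x ℓ n - fq h ℓ n / (ℓ * gammaq h ℓ) * Acal a x| := by
  have hfq : fq h ℓ n = 1 := fq_eq_one_of_gcd_eq_one h <| by
    rw [Int.gcd_natCast_natCast]
    exact ((hℓ.coprime_iff_not_dvd).2 hℓn).symm
  set c := fq h ℓ n / (ℓ * gammaq h ℓ)
  have hℓ1 : (0 : ℝ) < ℓ - 1 := by linarith [show (1 : ℝ) < ℓ by exact_mod_cast hℓ.one_lt]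
  have hA : 0 ≤ Acal a x := sum_nonneg fun n _ => ha n
  have hcA : 3 / 2 * c * Acal a x < a n :=
    calc 3 / 2 * c * Acal a x ≤ 3 / 2 * (1 / ((ℓ : ℝ) - 1)) * Acal a x := by
          gcongr
          exact hfq ▸ one_div_mul_gammaq_prime_le hℓ h0
      _ < a n := by
        rw [mul_one_div, div_mul_eq_mul_div, div_lt_iff₀ hℓ1]
        linarith
  calc 1 / 2 * c * Acal a x = 3 / 2 * c * Acal a x - c * Acal a x := by ring
    _ ≤ AcalMod a x ℓ n - c * Acal a x := by linarith [le_AcalMod_self ha hn ℓ]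
    _ ≤ |AcalMod a x ℓ n - c * Acal a x| := le_abs_self _

theorem statement4_general (a h : ℕ → ℝ) (x : ℝ)
    (ha : ∀ n, 0 ≤ a n)
    (hmul : IsMultFun h)
    (hnn : ∀ n, 0 ≤ h n)
    (hlt : ∀ p k : ℕ, Nat.Prime p → 1 ≤ k → h (p ^ k) < (p : ℝ) ^ k)
    (q : ℕ) (hq : 0 < q)
    (hq6 : 6 < h q) :
    (1 / 2) * (h q / q) * Acal a x ≤ |AcalMod a x q 0 - h q / q * Acal a x| ∨
    ∀ ℓ : ℕ, Nat.Prime ℓ → 3 * (x + q) / h q ≤ (ℓ : ℝ) → (ℓ : ℝ) ≤ x → ¬ ℓ ∣ q →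
      ∃ b : ℤ, (1 / 2) * (fq h ℓ b / (ℓ * gammaq h ℓ)) * Acal a x ≤
        |AcalMod a x ℓ b - fq h ℓ b / (ℓ * gammaq h ℓ) * Acal a x| := by
  refine or_iff_not_imp_left.2 fun hfar ℓ hℓ hℓlo _ hℓq => ?_
  set A := Acal a x
  set N := ⌊x⌋₊
  have hA : 0 ≤ A := sum_nonneg fun n _ => ha n
  have hhq : 0 < h q := by linarith
  have hhqq : h q ≤ q := hmul.le_self hnn hlt hq
  have hmass : h q / q * A / 2 < AcalMod a x q 0 := by
    linarith [(abs_lt.1 (not_le.1 hfar)).1]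
  obtain ⟨n, hn, hqn, hheavy⟩ := exists_dvd_mul_AcalMod_zero_le ha
    ((by positivity : 0 ≤ h q / q * A / 2).trans_lt hmass)
  have hN : 1 ≤ N := (mem_Icc.1 hn).1.trans (mem_Icc.1 hn).2
  have hℓN : 3 * (N + q) ≤ h q * ℓ := by
    rw [div_le_iff₀ hhq] at hℓlo
    linarith [Nat.floor_le (zero_le_one.trans ((Nat.one_le_floor_iff x).1 hN))]
  have hℓn : ¬ ℓ ∣ n := by
    intro hℓn
    have hdvd : ℓ * q ∣ n := ((hℓ.coprime_iff_not_dvd).2 hℓq).mul_dvd_of_dvd_of_dvd hℓn hqn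
    have : ((ℓ * q : ℕ) : ℝ) ≤ N := by
      exact_mod_cast (Nat.le_of_dvd (mem_Icc.1 hn).1 hdvd).trans (mem_Icc.1 hn).2
    push_cast at this
    nlinarith [mul_le_mul_of_nonneg_right hhqq (Nat.cast_nonneg ℓ : (0 : ℝ) ≤ ℓ)]
  refine ⟨n, le_abs_AcalMod_prime_sub ha hℓ (hnn ℓ) hn hℓn ?_⟩
  have hq' : (0 : ℝ) < q := by exact_mod_cast hq
  have hmassN : h q * A < 2 * N * a n := by
    have := mul_lt_mul_of_pos_left hmass hq'
    field_simp at this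
    linarith
  show 3 * A < 2 * ((ℓ : ℝ) - 1) * a n
  have hℓ1 : (0 : ℝ) < ℓ - 1 := by linarith [show (1 : ℝ) < ℓ by exact_mod_cast hℓ.one_lt]
  have h3N : 3 * (N : ℝ) ≤ h q * (ℓ - 1) := by linarith
  refine lt_of_mul_lt_mul_left ?_ (by positivity : (0 : ℝ) ≤ N)
  nlinarith [mul_le_mul_of_nonneg_right h3N hA, mul_lt_mul_of_pos_right hmassN hℓ1]

theorem statement4 (a h : ℕ → ℝ) (x : ℝ)
    (ha : ∀ n, 0 ≤ a n)
    (hmul : IsMultFun h)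
    (hnn : ∀ n, 0 ≤ h n)
    (hlt : ∀ p k : ℕ, Nat.Prime p → 1 ≤ k → h (p ^ k) < (p : ℝ) ^ k)
    (q : ℕ) (hq : 0 < q) (hqx : (q : ℝ) ≤ x)
    (hq6 : 6 < h q) (hA : 0 < Acal a x) :
    (1 / 2) * (h q / q) * Acal a x ≤ |AcalMod a x q 0 - h q / q * Acal a x| ∨
    ∀ ℓ : ℕ, Nat.Prime ℓ → 3 * (x + q) / h q ≤ (ℓ : ℝ) → (ℓ : ℝ) ≤ x → ¬ ℓ ∣ q →
      ∃ b : ℤ, (1 / 2) * (fq h ℓ b / (ℓ * gammaq h ℓ)) * Acal a x ≤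
        |AcalMod a x ℓ b - fq h ℓ b / (ℓ * gammaq h ℓ) * Acal a x| :=
  statement4_general a h x ha hmul hnn hlt q hq hq6
end
end

section
/- There is an absolute constant c > 0 such that for all sufficiently large x the following holds. Assume 𝒜(x) > 0, let q ≤ √x be a positive integer with (q, 𝒮) = 1, and let y ≤ x/4 be a positive integer. Then (q/φ(q))·Δ_q(x) + Δ̃(y, x) ≥ c·|(1/(γ_q·y))·Σ_{s ≤ y} f_q(s) − 1|, where s runs over positive integers. -/
open scoped Classical

noncomputable section

/-!
Pick multiples `Jq < ⋯ < Kq` of `q` in `[x/4, 3x/4]` with `K - J ≥ x/(4q)`. For each `s ≤ y`,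
`𝒜(Kq + s; q, s) - 𝒜(Jq + s; q, s)` equals `f_q(s)(K - J)𝒜(x)/(γ_q x)` up to `2Δ_q(x)𝒜(x)/φ(q)`.
Summed over `s ≤ y`, these differences count exactly the short intervals `(kq, kq + y]`,
`J < k ≤ K`, each of which carries `y𝒜(x)/x` up to `Δ̃(y, x)·y𝒜(x)/x`. Comparing the two
evaluations and dividing by `(K - J)y𝒜(x)/x` gives the inequality with `c = 1/8`.
-/

lemma le_sSup_mul_of_div_mem {s : Set ℝ} (hs : BddAbove s) {u c : ℝ} (hc : 0 < c)
    (hu : u / c ∈ s) : u ≤ sSup s * c :=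
  (div_le_iff₀ hc).1 (le_csSup hs hu)

lemma abs_sum_sub_sum_le_card_mul {ι : Type*} (s : Finset ι) {f g : ι → ℝ} {ε : ℝ}
    (h : ∀ i ∈ s, |f i - g i| ≤ ε) : |∑ i ∈ s, f i - ∑ i ∈ s, g i| ≤ s.card * ε := by
  rw [← Finset.sum_sub_distrib, ← nsmul_eq_mul]
  exact (Finset.abs_sum_le_sum_abs _ _).trans (Finset.sum_le_card_nsmul _ _ _ h)

lemma exists_multiples_block {q : ℕ} (hq : 0 < q) {x : ℝ} (hqx : 8 * q ≤ x) :
    ∃ J K : ℕ, J ≤ K ∧ x / 4 ≤ J * q ∧ K * q ≤ 3 * x / 4 ∧ x ≤ 4 * q * ((K : ℝ) - J) := by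
  have hq0 : (0 : ℝ) < q := mod_cast hq
  set t := x / (4 * q)
  have hxt : x = 4 * q * t := (mul_div_cancel₀ x (by positivity)).symm
  have ht : 2 ≤ t := by rw [le_div_iff₀ (by positivity)]; linarith
  have hJ := Nat.le_ceil t
  have hJ' := Nat.ceil_lt_add_one (by linarith : 0 ≤ t)
  have hK := Nat.floor_le (by linarith : 0 ≤ 3 * t)
  have hK' := Nat.lt_floor_add_one (3 * t)
  refine ⟨⌈t⌉₊, ⌊3 * t⌋₊, Nat.cast_le (α := ℝ).1 (by linarith), ?_, ?_, ?_⟩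
  · rw [hxt]; nlinarith
  · rw [hxt]; nlinarith
  · rw [hxt]; exact mul_le_mul_of_nonneg_left (by linarith) (by positivity)

lemma Acal_natCast_sub (a : ℕ → ℝ) {N₁ N₂ : ℕ} (h : N₁ ≤ N₂) :
    Acal a N₂ - Acal a N₁ = ∑ n ∈ Finset.Ioc N₁ N₂, a n := by
  simp only [Acal, Nat.floor_natCast]
  change ∑ n ∈ Finset.Ioc 0 N₂, a n - ∑ n ∈ Finset.Ioc 0 N₁, a n = _
  rw [← Finset.sum_Ioc_consecutive a (Nat.zero_le N₁) h, add_sub_cancel_left]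

lemma AcalMod_natCast_sub (a : ℕ → ℝ) {N₁ N₂ : ℕ} (h : N₁ ≤ N₂) (q : ℕ) (b : ℤ) :
    AcalMod a N₂ q b - AcalMod a N₁ q b =
      ∑ n ∈ (Finset.Ioc N₁ N₂).filter (fun n : ℕ => (n : ℤ) % q = b % q), a n := by
  simp only [AcalMod, Nat.floor_natCast, Finset.sum_filter]
  change ∑ n ∈ Finset.Ioc 0 N₂, _ - ∑ n ∈ Finset.Ioc 0 N₁, _ = _
  rw [← Finset.sum_Ioc_consecutive _ (Nat.zero_le N₁) h, add_sub_cancel_left]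

lemma Acal_add_sub (a : ℕ → ℝ) (c y : ℕ) :
    Acal a ((c + y : ℕ) : ℝ) - Acal a c = ∑ s ∈ Finset.Icc 1 y, a (c + s) := by
  have hshift := Finset.map_add_left_Ioc 0 y c
  rw [add_zero] at hshift
  rw [Acal_natCast_sub a (Nat.le_add_right c y), ← hshift, Finset.sum_map]
  rfl

lemma filter_Ioc_modEq_eq_image {q : ℕ} (hq : 0 < q) (s m' m : ℕ) :
    (Finset.Ioc (m' * q + s) (m * q + s)).filter (fun n : ℕ => (n : ℤ) % q = (s : ℤ) % q) =
      (Finset.Ioc m' m).image (fun k => k * q + s) := by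
  ext n
  simp only [Finset.mem_filter, Finset.mem_Ioc, Finset.mem_image]
  norm_cast
  constructor
  · rintro ⟨⟨hlo, hhi⟩, hmod⟩
    obtain ⟨k, hk⟩ := (Nat.modEq_iff_dvd' (by omega : s ≤ n)).1 hmod.symm
    have hn : n = k * q + s := by rw [mul_comm] at hk; omega
    subst hn
    exact ⟨k, ⟨Nat.lt_of_mul_lt_mul_right (a := q) (by omega),
      Nat.le_of_mul_le_mul_right (by omega) hq⟩, rfl⟩
  · rintro ⟨k, ⟨hlo, hhi⟩, rfl⟩
    refine ⟨⟨?_, ?_⟩, by simp⟩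
    · have := Nat.mul_lt_mul_of_pos_right hlo hq
      omega
    · have := Nat.mul_le_mul_right q hhi
      omega

lemma AcalMod_mul_add_sub (a : ℕ → ℝ) {q : ℕ} (hq : 0 < q) (s : ℕ) {m' m : ℕ} (h : m' ≤ m) :
    AcalMod a ((m * q + s : ℕ) : ℝ) q s - AcalMod a ((m' * q + s : ℕ) : ℝ) q s =
      ∑ k ∈ Finset.Ioc m' m, a (k * q + s) := by
  rw [AcalMod_natCast_sub a (by gcongr) q s, filter_Ioc_modEq_eq_image hq,
    Finset.sum_image fun i _ j _ hij => Nat.eq_of_mul_eq_mul_right hq (by omega)]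

lemma sum_AcalMod_sub_eq_sum_Acal_sub (a : ℕ → ℝ) {q : ℕ} (hq : 0 < q) {J K : ℕ} (hJK : J ≤ K)
    (y : ℕ) :
    ∑ s ∈ Finset.Icc 1 y,
        (AcalMod a ((K * q + s : ℕ) : ℝ) q s - AcalMod a ((J * q + s : ℕ) : ℝ) q s) =
      ∑ k ∈ Finset.Ioc J K, (Acal a ((k * q + y : ℕ) : ℝ) - Acal a ((k * q : ℕ) : ℝ)) := by
  simp only [AcalMod_mul_add_sub a hq _ hJK, Acal_add_sub]
  exact Finset.sum_comm

lemma Acal_nonneg {a : ℕ → ℝ} (ha : ∀ n, 0 ≤ a n) (x : ℝ) : 0 ≤ Acal a x :=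
  Finset.sum_nonneg fun n _ => ha n

lemma Acal_mono {a : ℕ → ℝ} (ha : ∀ n, 0 ≤ a n) {x y : ℝ} (hxy : x ≤ y) :
    Acal a x ≤ Acal a y :=
  Finset.sum_le_sum_of_subset_of_nonneg (Finset.Icc_subset_Icc_right (Nat.floor_mono hxy))
    fun n _ _ => ha n

lemma AcalMod_nonneg {a : ℕ → ℝ} (ha : ∀ n, 0 ≤ a n) (x : ℝ) (q : ℕ) (b : ℤ) :
    0 ≤ AcalMod a x q b :=
  Finset.sum_nonneg fun n _ => ha n

lemma AcalMod_le_Acal {a : ℕ → ℝ} (ha : ∀ n, 0 ≤ a n) (x : ℝ) (q : ℕ) (b : ℤ) :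
    AcalMod a x q b ≤ Acal a x :=
  Finset.sum_le_sum_of_subset_of_nonneg (Finset.filter_subset _ _) fun n _ _ => ha n

lemma gammaq_pos {h : ℕ → ℝ} (hh : ∀ n, h n ≤ 1) (q : ℕ) : 0 < gammaq h q :=
  Finset.prod_pos fun p hp => by
    have hp2 : (2 : ℝ) ≤ p := mod_cast (Nat.prime_of_mem_primeFactors hp).two_le
    exact div_pos (by linarith) (by linarith [hh p])

/-- `f_q(b)` only depends on `gcd(b, q) ≤ q`, so it takes finitely many values. -/
lemma abs_fq_le_sum {q : ℕ} (hq : 0 < q) (h : ℕ → ℝ) (b : ℤ) :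
    |fq h q b| ≤ ∑ d ∈ Finset.range (q + 1), |fq h q d| := by
  have hgcd : fq h q b = fq h q (Int.gcd b q) := by
    simp only [fq, Int.gcd_gcd_self_left_right]
  have hle : Int.gcd b q ≤ q := Nat.le_of_dvd hq (mod_cast Int.gcd_dvd_right b q)
  rw [hgcd]
  exact Finset.single_le_sum (f := fun d : ℕ => |fq h q d|) (fun _ _ => abs_nonneg _)
    (Finset.mem_range_succ_iff.2 hle)

lemma abs_AcalMod_sub_le_Deltaq_mul {a : ℕ → ℝ} (ha : ∀ n, 0 ≤ a n) (h : ℕ → ℝ) {x : ℝ}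
    (hA : 0 < Acal a x) {q : ℕ} (hq : 0 < q) {y : ℝ} (b : ℤ) (hy : x / 4 ≤ y) (hyx : y ≤ x) :
    |AcalMod a y q b - fq h q b / (q * gammaq h q) * (y / x) * Acal a x| ≤
      Deltaq a h q x * (Acal a x / (Nat.totient q : ℝ)) := by
  have hφ : (0 : ℝ) < Nat.totient q := mod_cast Nat.totient_pos.2 hq
  refine le_sSup_mul_of_div_mem ?_ (by positivity) ⟨y, b, hy, hyx, rfl⟩
  set M := ∑ d ∈ Finset.range (q + 1), |fq h q d|
  refine ⟨(Acal a x + M / |q * gammaq h q| * Acal a x) / (Acal a x / Nat.totient q), ?_⟩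
  rintro _ ⟨y', b', hy', hy'x, rfl⟩
  gcongr
  have hfq : |fq h q b' / (q * gammaq h q)| ≤ M / |q * gammaq h q| := by
    rw [abs_div]
    exact div_le_div_of_nonneg_right (abs_fq_le_sum hq h b') (abs_nonneg _)
  have hratio : |y' / x| ≤ 1 := by
    rw [abs_of_nonneg (div_nonneg (by linarith) (by linarith))]
    exact div_le_one_of_le₀ hy'x (by linarith)
  calc _ ≤ |AcalMod a y' q b'| + |fq h q b' / (q * gammaq h q)| * |y' / x| * Acal a x := by
        rw [← abs_of_pos hA, ← abs_mul, ← abs_mul, abs_of_pos hA]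
        exact abs_sub _ _
    _ ≤ Acal a x + M / |q * gammaq h q| * 1 * Acal a x := by
        gcongr
        · rw [abs_of_nonneg (AcalMod_nonneg ha y' q b')]
          exact (AcalMod_le_Acal ha y' q b').trans (Acal_mono ha hy'x)
    _ = Acal a x + M / |q * gammaq h q| * Acal a x := by rw [mul_one]

lemma abs_Acal_sub_le_DeltaTilde_mul {a : ℕ → ℝ} (ha : ∀ n, 0 ≤ a n) {x : ℝ}
    (hA : 0 < Acal a x) {y : ℝ} (hy : 0 < y) {v : ℝ} (hv : x / 4 ≤ v) (hvy : v + y ≤ x) :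
    |Acal a (v + y) - Acal a v - y * Acal a x / x| ≤ DeltaTilde a y x * (y * Acal a x / x) := by
  have hx : 0 < x := by linarith
  refine le_sSup_mul_of_div_mem ?_ (by positivity) ⟨v, hv, hvy, rfl⟩
  refine ⟨(Acal a x + y * Acal a x / x) / (y * Acal a x / x), ?_⟩
  rintro _ ⟨v', hv', hv'y, rfl⟩
  gcongr
  have hincr : |Acal a (v' + y) - Acal a v'| ≤ Acal a x :=
    abs_sub_le_of_nonneg_of_le (Acal_nonneg ha _) (Acal_mono ha hv'y) (Acal_nonneg ha _)
      (Acal_mono ha (by linarith))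
  calc _ ≤ |Acal a (v' + y) - Acal a v'| + |y * Acal a x / x| := abs_sub _ _
    _ ≤ Acal a x + y * Acal a x / x := by
        rw [abs_of_pos (by positivity : 0 < y * Acal a x / x)]
        exact add_le_add_left hincr _

lemma Deltaq_nonneg {a : ℕ → ℝ} (ha : ∀ n, 0 ≤ a n) (h : ℕ → ℝ) {x : ℝ} (hx : 0 ≤ x)
    (hA : 0 < Acal a x) {q : ℕ} (hq : 0 < q) : 0 ≤ Deltaq a h q x :=
  have hφ : (0 : ℝ) < Nat.totient q := mod_cast Nat.totient_pos.2 hq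
  nonneg_of_mul_nonneg_left ((abs_nonneg _).trans
    (abs_AcalMod_sub_le_Deltaq_mul ha h hA hq 0 (by linarith) le_rfl)) (by positivity)

lemma DeltaTilde_nonneg {a : ℕ → ℝ} (ha : ∀ n, 0 ≤ a n) {x : ℝ} (hA : 0 < Acal a x) {y : ℝ}
    (hy : 0 < y) (hyx : y ≤ 3 * x / 4) : 0 ≤ DeltaTilde a y x :=
  have hx : 0 < x := by linarith
  nonneg_of_mul_nonneg_left ((abs_nonneg _).trans
    (abs_Acal_sub_le_DeltaTilde_mul ha hA hy le_rfl (by linarith))) (by positivity)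

lemma abs_AcalMod_sub_AcalMod_le {a : ℕ → ℝ} (ha : ∀ n, 0 ≤ a n) (h : ℕ → ℝ) {x : ℝ}
    (hA : 0 < Acal a x) {q : ℕ} (hq : 0 < q) (b : ℤ) {y₁ y₂ : ℝ} (hy₁ : x / 4 ≤ y₁)
    (hy₁x : y₁ ≤ x) (hy₂ : x / 4 ≤ y₂) (hy₂x : y₂ ≤ x) :
    |AcalMod a y₂ q b - AcalMod a y₁ q b - fq h q b / (q * gammaq h q) * ((y₂ - y₁) / x) *
        Acal a x| ≤ 2 * (Deltaq a h q x * (Acal a x / (Nat.totient q : ℝ))) := by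
  have h₁ := abs_AcalMod_sub_le_Deltaq_mul ha h hA hq b hy₁ hy₁x
  have h₂ := abs_AcalMod_sub_le_Deltaq_mul ha h hA hq b hy₂ hy₂x
  calc _ = |(AcalMod a y₂ q b - fq h q b / (q * gammaq h q) * (y₂ / x) * Acal a x) -
          (AcalMod a y₁ q b - fq h q b / (q * gammaq h q) * (y₁ / x) * Acal a x)| := by
        congr 1; ring
    _ ≤ _ := abs_sub _ _
    _ ≤ _ := by linarith

lemma abs_sum_AcalMod_block_sub_le {a : ℕ → ℝ} (ha : ∀ n, 0 ≤ a n) (h : ℕ → ℝ) {x : ℝ}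
    (hA : 0 < Acal a x) {q : ℕ} (hq : 0 < q) (y : ℕ) {J K : ℕ} (hJK : J ≤ K)
    (hJ : x / 4 ≤ J * q) (hK : K * q + y ≤ x) :
    |∑ s ∈ Finset.Icc 1 y,
        (AcalMod a ((K * q + s : ℕ) : ℝ) q s - AcalMod a ((J * q + s : ℕ) : ℝ) q s) -
      (∑ s ∈ Finset.Icc 1 y, fq h q (s : ℤ)) * (((K : ℝ) - J) * Acal a x / (gammaq h q * x))| ≤
      y * (2 * (Deltaq a h q x * (Acal a x / (Nat.totient q : ℝ)))) := by
  have hq0 : (0 : ℝ) < q := mod_cast hq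
  have hJKq : (J : ℝ) * q ≤ K * q := by gcongr
  rw [Finset.sum_mul]
  refine (abs_sum_sub_sum_le_card_mul (ε := 2 * (Deltaq a h q x * (Acal a x / Nat.totient q)))
    _ fun s hs => ?_).trans_eq (by simp)
  have hs' : (1 : ℝ) ≤ s ∧ (s : ℝ) ≤ y := by
    obtain ⟨h1, h2⟩ := Finset.mem_Icc.1 hs
    exact ⟨mod_cast h1, mod_cast h2⟩
  convert abs_AcalMod_sub_AcalMod_le ha h hA hq s (y₁ := ((J * q + s : ℕ) : ℝ))
    (y₂ := ((K * q + s : ℕ) : ℝ)) (by push_cast; linarith) (by push_cast; linarith)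
    (by push_cast; linarith) (by push_cast; linarith) using 3
  push_cast
  field_simp
  ring

lemma abs_sum_Acal_block_sub_le {a : ℕ → ℝ} (ha : ∀ n, 0 ≤ a n) {x : ℝ} (hA : 0 < Acal a x)
    {q : ℕ} {y : ℕ} (hy : 0 < y) {J K : ℕ} (hJK : J ≤ K) (hJ : x / 4 ≤ J * q)
    (hK : K * q + y ≤ x) :
    |∑ k ∈ Finset.Ioc J K, (Acal a ((k * q + y : ℕ) : ℝ) - Acal a ((k * q : ℕ) : ℝ)) -
      ((K : ℝ) - J) * (y * Acal a x / x)| ≤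
      ((K : ℝ) - J) * (DeltaTilde a y x * (y * Acal a x / x)) := by
  have hy0 : (0 : ℝ) < y := mod_cast hy
  have hsum := abs_sum_sub_sum_le_card_mul (Finset.Ioc J K)
    (f := fun k => Acal a ((k * q + y : ℕ) : ℝ) - Acal a ((k * q : ℕ) : ℝ))
    (g := fun _ => y * Acal a x / x)
    (ε := DeltaTilde a y x * (y * Acal a x / x)) fun k hk => by
      obtain ⟨hJk, hkK⟩ := Finset.mem_Ioc.1 hk
      have hkq : (J : ℝ) * q ≤ k * q ∧ (k : ℝ) * q ≤ K * q := ⟨by gcongr, by gcongr⟩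
      have := abs_Acal_sub_le_DeltaTilde_mul ha hA hy0 (v := ((k * q : ℕ) : ℝ))
        (by push_cast; linarith) (by push_cast; linarith)
      push_cast at this ⊢
      exact this
  rwa [Finset.sum_const, nsmul_eq_mul, Nat.card_Ioc, Nat.cast_sub hJK] at hsum

lemma abs_mean_fq_sub_one_le {a h : ℕ → ℝ} (ha : ∀ n, 0 ≤ a n) (hh : ∀ n, h n ≤ 1) {x : ℝ}
    (hA : 0 < Acal a x) {q : ℕ} (hq : 0 < q) {y : ℕ} (hy : 0 < y) {J K : ℕ} (hJK : J ≤ K)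
    (hJ : x / 4 ≤ J * q) (hK : K * q + y ≤ x) (hN : x ≤ 4 * q * ((K : ℝ) - J)) :
    |(1 / (gammaq h q * (y : ℝ))) * ∑ s ∈ Finset.Icc 1 y, fq h q (s : ℤ) - 1| ≤
      8 * ((q : ℝ) / (Nat.totient q : ℝ)) * Deltaq a h q x + DeltaTilde a (y : ℝ) x := by
  have hprogressions := abs_sum_AcalMod_block_sub_le ha h hA hq y hJK hJ hK
  have hshort := abs_sum_Acal_block_sub_le ha hA hy hJK hJ hK
  rw [sum_AcalMod_sub_eq_sum_Acal_sub a hq hJK] at hprogressions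
  set E := ∑ k ∈ Finset.Ioc J K, (Acal a ((k * q + y : ℕ) : ℝ) - Acal a ((k * q : ℕ) : ℝ))
  set A := Acal a x
  set γ := gammaq h q
  set φq := (Nat.totient q : ℝ)
  set N := (K : ℝ) - J
  set P := ∑ s ∈ Finset.Icc 1 y, fq h q (s : ℤ)
  set Dq := Deltaq a h q x
  set Dt := DeltaTilde a y x
  have hγ : 0 < γ := gammaq_pos hh q
  have hφ : 0 < φq := Nat.cast_pos.2 (Nat.totient_pos.2 hq)
  have hq0 : (0 : ℝ) < q := mod_cast hq
  have hy0 : (0 : ℝ) < y := mod_cast hy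
  have hJKq : (J : ℝ) * q ≤ K * q := by gcongr
  have hx : 0 < x := by linarith
  have hN0 : 0 < N := pos_of_mul_pos_right (by linarith : 0 < 4 * q * N) (by positivity)
  have hDq : 0 ≤ Dq := Deltaq_nonneg ha h hx.le hA hq
  set R := N * (y * A / x)
  have hR : 0 < R := by positivity
  have hcompare : y * (2 * (Dq * (A / φq))) ≤ 8 * (q / φq) * Dq * R := by
    have hdiff : 8 * (q / φq) * Dq * R - y * (2 * (Dq * (A / φq))) =
        2 * y * Dq * A / (φq * x) * (4 * q * N - x) := by
      simp only [R]; field_simp; ring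
    have : 0 ≤ 2 * y * Dq * A / (φq * x) * (4 * q * N - x) :=
      mul_nonneg (by positivity) (by linarith)
    linarith
  refine le_of_mul_le_mul_right ?_ hR
  calc |1 / (γ * y) * P - 1| * R = |(1 / (γ * y) * P - 1) * R| := by rw [abs_mul, abs_of_pos hR]
    _ = |P * (N * A / (γ * x)) - R| := by congr 1; simp only [R]; field_simp
    _ ≤ |E - P * (N * A / (γ * x))| + |E - R| := by
        rw [abs_sub_comm E]; exact abs_sub_le _ _ _
    _ ≤ y * (2 * (Dq * (A / φq))) + N * (Dt * (y * A / x)) := add_le_add hprogressions hshort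
    _ ≤ (8 * (q / φq) * Dq + Dt) * R := by
        simp only [R] at hcompare ⊢; linarith

theorem statement6 :
    ∃ c : ℝ, 0 < c ∧ ∃ x₀ : ℝ, ∀ x : ℝ, x₀ ≤ x →
    ∀ (a h : ℕ → ℝ) (S : Finset ℕ),
      (∀ n, 0 ≤ a n) →
      (∀ p ∈ S, Nat.Prime p) →
      IsMultFun h →
      (∀ n, 0 ≤ h n ∧ h n ≤ 1) →
      0 < Acal a x →
      ∀ q : ℕ, 0 < q → (q : ℝ) ≤ Real.sqrt x → (∀ p ∈ S, ¬ p ∣ q) →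
      ∀ y : ℕ, 0 < y → (y : ℝ) ≤ x / 4 →
        c * |(1 / (gammaq h q * (y : ℝ))) * ∑ s ∈ Finset.Icc 1 y, fq h q (s : ℤ) - 1| ≤
          ((q : ℝ) / (Nat.totient q : ℝ)) * Deltaq a h q x + DeltaTilde a (y : ℝ) x := by
  refine ⟨1 / 8, by norm_num, 64, ?_⟩
  intro x hx a h S ha _ _ hh hA q hq hqx _ y hy hyx
  have h8q : 8 * (q : ℝ) ≤ x := by
    nlinarith [Real.sq_sqrt (by linarith : 0 ≤ x), Real.sqrt_nonneg x]
  obtain ⟨J, K, hJK, hJ, hK, hN⟩ := exists_multiples_block hq h8q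
  have hmain := abs_mean_fq_sub_one_le ha (fun n => (hh n).2) hA hq hy hJK hJ (by linarith) hN
  have hDt := DeltaTilde_nonneg ha hA (by exact_mod_cast hy : (0 : ℝ) < y) (by linarith)
  linarith
end
end

section
/- For every ξ with 1 ≤ ξ ≤ (2/3)·log z we have |E(u)| ≤ exp(H(ξ) − ξ·u + 5·J(ξ)) for every u ≥ 0, and ∫₀^∞ e^{ξ·u}·|E(u)| du ≤ (3/ξ)·exp(H(ξ) + 5·J(ξ)). -/
open scoped Classical

noncomputable section

/-- `G_q(1) = ∏_{p | q} (1 - 1/p)(1 + f(p)/p + f(p²)/p² + …)`. -/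
def Gq (f : ℕ → ℝ) (q : ℕ) : ℝ :=
  ∏ p ∈ q.primeFactors, ((1 - 1 / (p : ℝ)) * ∑' k : ℕ, f (p ^ k) / (p : ℝ) ^ k)

/-- `E(u) = z^{-u} Σ_{n ≤ z^u} (f(n) - G_q(1))`. -/
def Efun (f : ℕ → ℝ) (q : ℕ) (z u : ℝ) : ℝ :=
  z ^ (-u) * ∑ n ∈ Finset.Icc 1 ⌊z ^ u⌋₊, (f n - Gq f q)

/-- `H_j(ξ) = Σ_{p | q} ((1 - f(p))/p) p^{ξ/log z} (log(z/p)/log z)^j`. -/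
def Hfun (f : ℕ → ℝ) (q : ℕ) (z : ℝ) (j : ℕ) (ξ : ℝ) : ℝ :=
  ∑ p ∈ q.primeFactors,
    (1 - f p) / (p : ℝ) * (p : ℝ) ^ (ξ / Real.log z) *
      (Real.log (z / (p : ℝ)) / Real.log z) ^ j

/-- `J(ξ) = Σ_{p | q} p^{-2} p^{2ξ/log z}`. -/
def Jfun (q : ℕ) (z ξ : ℝ) : ℝ :=
  ∑ p ∈ q.primeFactors, (p : ℝ) ^ (2 * ξ / Real.log z) / (p : ℝ) ^ 2

open MeasureTheory

open ArithmeticFunction Finset Real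

open scoped ArithmeticFunction.Moebius ArithmeticFunction.zeta

/-!
Put `g = μ ⋆ f`, so that `f = g ⋆ 1`; `g` is supported on `q`-smooth numbers, `|g(p^k)| ≤ 1`,
and `∑ g(d)/d = G_q(1)` as an Euler product. Hence
`∑_{n ≤ N} (f(n) - G_q(1)) = ∑_d g(d) (⌊N/d⌋ - N/d)`, and with `N = ⌊z^u⌋` every rounding error
is at most `min(1, N/d)`, so that `|E(u)| ≤ ∑_d |g(d)| min(z^{-u}, 1/d)`.

Rankin's trick `min(a, b) ≤ a^β b^{1-β}` with `β = ξ / log z` bounds this by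
`e^{-ξu} ∑_d |g(d)| d^{β-1}`, an Euler product whose factor at `p` is
`1 + (1 - f(p)) p^{β-1} + O(p^{2β-2})`; the condition `ξ ≤ (2/3) log z` gives
`p^{β-1} ≤ 2^{-1/3} ≤ 4/5`, which makes the constant `5` work. For the integral,
`∫₀^∞ e^{ξu} min(z^{-u}, 1/d) du` is computed by splitting at `z^u = d`; it is at most
`(1/ξ + 1/(log z - ξ)) d^{β-1} ≤ (3/ξ) d^{β-1}`.
-/

lemma hasSum_prod_tsum_of_abs_le_rpow {W : ℕ → ℝ} (h1 : W 1 = 1)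
    (hmul : ∀ {m n : ℕ}, m.Coprime n → W (m * n) = W m * W n) {c : ℝ} (hc : c < 0)
    (hbound : ∀ p k : ℕ, p.Prime → |W (p ^ k)| ≤ ((p : ℝ) ^ c) ^ k)
    {s : Finset ℕ} (hs : ∀ p ∈ s, p.Prime) (hsupp : W.support ⊆ Nat.factoredNumbers s) :
    HasSum W (∏ p ∈ s, ∑' k, W (p ^ k)) := by
  have hsum : ∀ {p : ℕ}, p.Prime → Summable fun k => ‖W (p ^ k)‖ := fun {p} hp =>
    .of_nonneg_of_le (fun _ => norm_nonneg _) (hbound p · hp) <|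
      summable_geometric_of_lt_one (by positivity)
        (rpow_lt_one_of_one_lt_of_neg (mod_cast hp.one_lt) hc)
  have h := (EulerProduct.summable_and_hasSum_factoredNumbers_prod_filter_prime_tsum h1 hmul
    hsum s).2
  rw [filter_true_of_mem hs] at h
  exact (hasSum_subtype_iff_of_support_subset hsupp).mp h

lemma ArithmeticFunction.IsMultiplicative.eq_zero_of_notMem_factoredNumbers
    {R : Type*} [CommMonoidWithZero R] {a : ArithmeticFunction R} (ha : a.IsMultiplicative)
    {s : Finset ℕ} (hs : ∀ p k : ℕ, p.Prime → p ∉ s → 1 ≤ k → a (p ^ k) = 0)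
    {d : ℕ} (hd : d ∉ Nat.factoredNumbers s) : a d = 0 := by
  rcases eq_or_ne d 0 with rfl | hd0
  · exact a.map_zero
  obtain ⟨p, hp, hpd, hps⟩ : ∃ p, p.Prime ∧ p ∣ d ∧ p ∉ s := by
    simpa [Nat.mem_factoredNumbers'] using hd
  rw [ha.multiplicative_factorization a hd0]
  exact prod_eq_zero (Nat.support_factorization d ▸ Nat.mem_primeFactors.2 ⟨hp, hpd, hd0⟩)
    (hs p _ hp hps (hp.factorization_pos_of_dvd hd0 hpd))

lemma abs_div_prime_pow_le {p : ℕ} {a : ℝ} (ha : |a| ≤ 1) (hp : p.Prime) (k : ℕ) :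
    |a / (p : ℝ) ^ k| ≤ (1 / (p : ℝ)) ^ k := by
  have hpk : (0 : ℝ) < (p : ℝ) ^ k := pow_pos (mod_cast hp.pos) k
  rw [abs_div, abs_of_pos hpk, one_div_pow]
  exact div_le_div_of_nonneg_right ha hpk.le

lemma summable_div_prime_pow {p : ℕ} {a : ℕ → ℝ} (ha : ∀ k, |a k| ≤ 1) (hp : p.Prime) :
    Summable fun k => a k / (p : ℝ) ^ k := by
  have hp1 : (1 : ℝ) < p := mod_cast hp.one_lt
  refine .of_norm_bounded (summable_geometric_of_lt_one (by positivity) ?_)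
    fun k => abs_div_prime_pow_le (ha k) hp k
  rwa [div_lt_one (by positivity)]

section RealAnalysis

open Set

lemma min_le_rpow_mul_rpow {a b θ : ℝ} (ha : 0 < a) (hb : 0 < b) (h0 : 0 ≤ θ)
    (h1 : θ ≤ 1) :
    min a b ≤ a ^ θ * b ^ (1 - θ) := by
  rcases le_total a b with hab | hab
  · calc min a b ≤ a ^ θ * a ^ (1 - θ) := by
          rw [← rpow_add ha, add_sub_cancel, rpow_one]; exact min_le_left a b
      _ ≤ a ^ θ * b ^ (1 - θ) := by gcongr
  · calc min a b ≤ b ^ θ * b ^ (1 - θ) := by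
          rw [← rpow_add hb, add_sub_cancel, rpow_one]; exact min_le_right a b
      _ ≤ a ^ θ * b ^ (1 - θ) := by gcongr

lemma abs_natCast_div_sub_div_le (N d : ℕ) :
    |((N / d : ℕ) : ℝ) - (N : ℝ) / d| ≤ min 1 ((N : ℝ) / d) := by
  rw [← Nat.floor_div_eq_div (K := ℝ), abs_sub_comm,
    abs_of_nonneg (sub_nonneg.2 (Nat.floor_le (by positivity)))]
  exact le_min (by linarith [Nat.lt_floor_add_one ((N : ℝ) / d)])
    (sub_le_self _ (Nat.cast_nonneg _))

lemma inv_mul_abs_floor_div_sub_le {x : ℝ} (hx : 0 < x) (d : ℕ) :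
    x⁻¹ * |((⌊x⌋₊ / d : ℕ) : ℝ) - (⌊x⌋₊ : ℝ) / d| ≤ min x⁻¹ (1 / d) := by
  have hN : x⁻¹ * ⌊x⌋₊ ≤ 1 := by
    rw [inv_mul_le_one₀ hx]; exact Nat.floor_le hx.le
  calc x⁻¹ * |((⌊x⌋₊ / d : ℕ) : ℝ) - (⌊x⌋₊ : ℝ) / d|
      ≤ x⁻¹ * min 1 ((⌊x⌋₊ : ℝ) / d) := by gcongr; exact abs_natCast_div_sub_div_le _ _
    _ = min x⁻¹ (x⁻¹ * ⌊x⌋₊ / d) := by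
        rw [mul_min_of_nonneg _ _ (by positivity), mul_one, mul_div_assoc]
    _ ≤ min x⁻¹ (1 / d) := by gcongr

lemma min_rpow_neg_one_div_le {z ξ : ℝ} (hz : 1 < z) (hξ0 : 0 ≤ ξ) (hξ : ξ ≤ log z)
    (u : ℝ) {d : ℝ} (hd : 0 < d) :
    min (z ^ (-u)) (1 / d) ≤ exp (-(ξ * u)) * d ^ (ξ / log z - 1) := by
  have hL : 0 < log z := log_pos hz
  have hz0 : 0 < z := by linarith
  convert min_le_rpow_mul_rpow (rpow_pos_of_pos hz0 (-u)) (one_div_pos.2 hd) (θ := ξ / log z)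
    (by positivity) ((div_le_one hL).2 hξ) using 2
  · rw [← rpow_mul hz0.le, rpow_def_of_pos hz0]
    field_simp
  · rw [one_div, inv_rpow hd.le, ← rpow_neg hd.le, neg_sub]

lemma rpow_le_four_fifths {x c : ℝ} (hx : 2 ≤ x) (hc : c ≤ -(1 / 3)) : x ^ c ≤ 4 / 5 := by
  have h2 : (2 : ℝ) ^ (-(1 / 3) : ℝ) ≤ 4 / 5 := by
    rw [← pow_le_pow_iff_left₀ (by positivity) (by norm_num) three_ne_zero, ← rpow_natCast,
      ← rpow_mul (by norm_num)]
    norm_num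
  calc x ^ c ≤ 2 ^ c := rpow_le_rpow_of_nonpos (by norm_num) hx (by linarith)
    _ ≤ 2 ^ (-(1 / 3) : ℝ) := rpow_le_rpow_of_exponent_le (by norm_num) hc
    _ ≤ 4 / 5 := h2

lemma lintegral_Iic_const_mul_exp_mul {C a : ℝ} (hC : 0 ≤ C) (ha : 0 < a) (c : ℝ) :
    ∫⁻ x in Iic c, ENNReal.ofReal (C * exp (a * x))
      = ENNReal.ofReal (C * (exp (a * c) / a)) := by
  rw [← integral_exp_mul_Iic ha c, ← integral_const_mul,
    ofReal_integral_eq_lintegral_ofReal ((integrableOn_exp_mul_Iic ha c).const_mul C)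
      (.of_forall fun _ => by positivity)]

lemma lintegral_Ioi_exp_neg_mul {b : ℝ} (hb : 0 < b) (c : ℝ) :
    ∫⁻ x in Ioi c, ENNReal.ofReal (exp (-(b * x))) = ENNReal.ofReal (exp (-(b * c)) / b) := by
  have h := integral_exp_mul_Ioi (neg_lt_zero.2 hb) c
  simp only [neg_mul, div_neg, neg_div, neg_neg] at h
  have hi : IntegrableOn (fun x => exp (-(b * x))) (Ioi c) := by
    simpa only [neg_mul] using integrableOn_exp_mul_Ioi (neg_lt_zero.2 hb) c
  rw [← h, ofReal_integral_eq_lintegral_ofReal hi (.of_forall fun _ => by positivity)]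

lemma lintegral_exp_mul_min_rpow_neg_le {z ξ : ℝ} (hz : 1 < z) (hξ : 0 < ξ) (hξz : ξ < log z)
    {d : ℝ} (hd : 1 ≤ d) :
    ∫⁻ u in Ioi 0, ENNReal.ofReal (exp (ξ * u) * min (z ^ (-u)) (1 / d))
      ≤ ENNReal.ofReal ((1 / ξ + 1 / (log z - ξ)) * d ^ (ξ / log z - 1)) := by
  have hL : 0 < log z := log_pos hz
  have hz0 : 0 < z := by linarith
  have hd0 : 0 < d := by linarith
  have hβ : exp (ξ * (log d / log z)) = d ^ (ξ / log z) := by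
    rw [rpow_def_of_pos hd0]; congr 1; field_simp
  have hβ1 : exp (-((log z - ξ) * (log d / log z))) = d ^ (ξ / log z - 1) := by
    rw [rpow_def_of_pos hd0]; congr 1; field_simp; ring
  have hleft : ∀ u, exp (ξ * u) * min (z ^ (-u)) (1 / d) ≤ d⁻¹ * exp (ξ * u) := fun u => by
    rw [mul_comm, ← one_div]; gcongr; exact min_le_right _ _
  have hright : ∀ u, exp (ξ * u) * min (z ^ (-u)) (1 / d) ≤ exp (-((log z - ξ) * u)) := by
    intro u
    calc exp (ξ * u) * min (z ^ (-u)) (1 / d) ≤ exp (ξ * u) * z ^ (-u) := by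
          gcongr; exact min_le_left _ _
      _ = exp (-((log z - ξ) * u)) := by rw [rpow_def_of_pos hz0, ← exp_add]; ring_nf
  calc ∫⁻ u in Ioi 0, ENNReal.ofReal (exp (ξ * u) * min (z ^ (-u)) (1 / d))
      ≤ ∫⁻ u, ENNReal.ofReal (exp (ξ * u) * min (z ^ (-u)) (1 / d)) :=
        setLIntegral_le_lintegral _ _
    _ = (∫⁻ u in Iic (log d / log z), ENNReal.ofReal (exp (ξ * u) * min (z ^ (-u)) (1 / d)))
          + ∫⁻ u in Ioi (log d / log z),
              ENNReal.ofReal (exp (ξ * u) * min (z ^ (-u)) (1 / d)) := by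
        rw [← lintegral_union measurableSet_Ioi (Iic_disjoint_Ioi le_rfl), Iic_union_Ioi,
          Measure.restrict_univ]
    _ ≤ (∫⁻ u in Iic (log d / log z), ENNReal.ofReal (d⁻¹ * exp (ξ * u)))
          + ∫⁻ u in Ioi (log d / log z), ENNReal.ofReal (exp (-((log z - ξ) * u))) :=
        add_le_add (lintegral_mono fun u => ENNReal.ofReal_le_ofReal (hleft u))
          (lintegral_mono fun u => ENNReal.ofReal_le_ofReal (hright u))
    _ = ENNReal.ofReal ((1 / ξ + 1 / (log z - ξ)) * d ^ (ξ / log z - 1)) := by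
        have hb : 0 < log z - ξ := by linarith
        rw [lintegral_Iic_const_mul_exp_mul (by positivity) hξ, lintegral_Ioi_exp_neg_mul hb,
          hβ, hβ1, ← ENNReal.ofReal_add (by positivity) (by positivity)]
        congr 1
        rw [rpow_sub_one hd0.ne']
        ring

end RealAnalysis

section Majorant

variable {z ξ : ℝ}

lemma abs_mul_min_rpow_neg_le (hz : 1 < z) (hξ0 : 0 ≤ ξ) (hξ : ξ ≤ log z) (a u : ℝ)
    (d : ℕ) :
    |a| * min (z ^ (-u)) (1 / d) ≤ exp (-(ξ * u)) * (|a| * (d : ℝ) ^ (ξ / log z - 1)) := by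
  rcases Nat.eq_zero_or_pos d with rfl | hd
  · rw [Nat.cast_zero, div_zero, min_eq_right (rpow_pos_of_pos (by linarith) _).le, mul_zero]
    positivity
  · rw [mul_left_comm]
    gcongr
    exact min_rpow_neg_one_div_le hz hξ0 hξ u (by positivity)

lemma lintegral_exp_mul_abs_mul_min_rpow_neg_le (hz : 1 < z) (hξ : 0 < ξ)
    (hξz : 3 / 2 * ξ ≤ log z) (a : ℝ) (d : ℕ) :
    ∫⁻ u in Set.Ioi 0, ENNReal.ofReal (exp (ξ * u) * (|a| * min (z ^ (-u)) (1 / d)))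
      ≤ ENNReal.ofReal (3 / ξ * (|a| * (d : ℝ) ^ (ξ / log z - 1))) := by
  rcases Nat.eq_zero_or_pos d with rfl | hd
  · simp [min_eq_right (rpow_pos_of_pos (by linarith : 0 < z) _).le]
  have hconst : 1 / ξ + 1 / (log z - ξ) ≤ 3 / ξ := by
    have : 1 / (log z - ξ) ≤ 2 / ξ := by
      rw [div_le_div_iff₀ (by linarith) hξ]; linarith
    linarith [show 3 / ξ = 1 / ξ + 2 / ξ by ring]
  calc ∫⁻ u in Set.Ioi 0, ENNReal.ofReal (exp (ξ * u) * (|a| * min (z ^ (-u)) (1 / d)))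
      = ENNReal.ofReal |a|
          * ∫⁻ u in Set.Ioi 0, ENNReal.ofReal (exp (ξ * u) * min (z ^ (-u)) (1 / d)) := by
        rw [← lintegral_const_mul' _ _ ENNReal.ofReal_ne_top]
        congr 1 with u
        rw [← ENNReal.ofReal_mul (abs_nonneg a), mul_left_comm]
    _ ≤ ENNReal.ofReal |a|
          * ENNReal.ofReal ((1 / ξ + 1 / (log z - ξ)) * (d : ℝ) ^ (ξ / log z - 1)) := by
        gcongr
        exact lintegral_exp_mul_min_rpow_neg_le hz hξ (by linarith) (mod_cast hd)
    _ ≤ ENNReal.ofReal (3 / ξ * (|a| * (d : ℝ) ^ (ξ / log z - 1))) := by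
        rw [← ENNReal.ofReal_mul (abs_nonneg a), mul_left_comm]
        gcongr

variable {a : ℕ → ℝ} {S : ℝ}

lemma summable_abs_mul_min_rpow_neg (hz : 1 < z) (hξ0 : 0 ≤ ξ) (hξ : ξ ≤ log z)
    (hS : Summable fun d : ℕ => |a d| * (d : ℝ) ^ (ξ / log z - 1)) (u : ℝ) :
    Summable fun d : ℕ => |a d| * min (z ^ (-u)) (1 / d) :=
  .of_nonneg_of_le (fun d => mul_nonneg (abs_nonneg _)
      (le_min (rpow_pos_of_pos (by linarith) _).le (by positivity)))
    (fun d => abs_mul_min_rpow_neg_le hz hξ0 hξ (a d) u d) (hS.mul_left _)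

lemma tsum_abs_mul_min_rpow_neg_le (hz : 1 < z) (hξ0 : 0 ≤ ξ) (hξ : ξ ≤ log z)
    (hS : HasSum (fun d : ℕ => |a d| * (d : ℝ) ^ (ξ / log z - 1)) S) (u : ℝ) :
    ∑' d : ℕ, |a d| * min (z ^ (-u)) (1 / d) ≤ exp (-(ξ * u)) * S := by
  rw [← hS.tsum_eq, ← tsum_mul_left]
  exact (summable_abs_mul_min_rpow_neg hz hξ0 hξ hS.summable u).tsum_le_tsum
    (fun d => abs_mul_min_rpow_neg_le hz hξ0 hξ (a d) u d) (hS.summable.mul_left _)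

lemma lintegral_exp_mul_tsum_abs_mul_min_rpow_neg_le (hz : 1 < z) (hξ : 0 < ξ)
    (hξz : 3 / 2 * ξ ≤ log z) (hS : HasSum (fun d : ℕ => |a d| * (d : ℝ) ^ (ξ / log z - 1)) S) :
    ∫⁻ u in Set.Ioi 0,
        ENNReal.ofReal (exp (ξ * u) * ∑' d : ℕ, |a d| * min (z ^ (-u)) (1 / d))
      ≤ ENNReal.ofReal (3 / ξ * S) := by
  have hsum (u : ℝ) := summable_abs_mul_min_rpow_neg hz hξ.le (by linarith) hS.summable u
  calc ∫⁻ u in Set.Ioi 0,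
        ENNReal.ofReal (exp (ξ * u) * ∑' d : ℕ, |a d| * min (z ^ (-u)) (1 / d))
      = ∫⁻ u in Set.Ioi 0, ∑' d : ℕ,
          ENNReal.ofReal (exp (ξ * u) * (|a d| * min (z ^ (-u)) (1 / d))) := by
        congr 1 with u
        rw [← tsum_mul_left, ENNReal.ofReal_tsum_of_nonneg (fun d => by positivity)
          ((hsum u).mul_left _)]
    _ = ∑' d : ℕ, ∫⁻ u in Set.Ioi 0,
          ENNReal.ofReal (exp (ξ * u) * (|a d| * min (z ^ (-u)) (1 / d))) :=
        lintegral_tsum fun d => by fun_prop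
    _ ≤ ∑' d : ℕ, ENNReal.ofReal (3 / ξ * (|a d| * (d : ℝ) ^ (ξ / log z - 1))) :=
        ENNReal.tsum_le_tsum fun d => lintegral_exp_mul_abs_mul_min_rpow_neg_le hz hξ hξz _ d
    _ = ENNReal.ofReal (3 / ξ * S) := by
        rw [← ENNReal.ofReal_tsum_of_nonneg (fun d => by positivity) (hS.summable.mul_left _),
          tsum_mul_left, hS.tsum_eq]

end Majorant

def moebiusConv (f : ℕ → ℝ) : ArithmeticFunction ℝ :=
  (μ : ArithmeticFunction ℝ) * toArithmeticFunction f

section MoebiusConv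

variable {f : ℕ → ℝ}

lemma toArithmeticFunction_apply {n : ℕ} (hn : n ≠ 0) : toArithmeticFunction f n = f n :=
  if_neg hn

lemma isMultiplicative_toArithmeticFunction (hf1 : f 1 = 1)
    (hfmul : ∀ m n : ℕ, Nat.Coprime m n → f (m * n) = f m * f n) :
    (toArithmeticFunction f).IsMultiplicative := by
  refine ⟨by simp [toArithmeticFunction, hf1], fun {m n} hmn => ?_⟩
  rcases eq_or_ne m 0 with rfl | hm
  · simp [toArithmeticFunction]
  rcases eq_or_ne n 0 with rfl | hn
  · simp [toArithmeticFunction]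
  rw [toArithmeticFunction_apply (mul_ne_zero hm hn), toArithmeticFunction_apply hm,
    toArithmeticFunction_apply hn, hfmul m n hmn]

lemma moebiusConv_mul_zeta : moebiusConv f * ζ = toArithmeticFunction f := by
  rw [moebiusConv, mul_comm _ (toArithmeticFunction f), mul_assoc, coe_moebius_mul_coe_zeta,
    mul_one]

lemma sum_divisors_moebiusConv {n : ℕ} (hn : n ≠ 0) :
    ∑ d ∈ n.divisors, moebiusConv f d = f n := by
  rw [← coe_mul_zeta_apply, moebiusConv_mul_zeta, toArithmeticFunction_apply hn]

lemma moebiusConv_one : moebiusConv f 1 = f 1 := by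
  simpa using sum_divisors_moebiusConv (f := f) one_ne_zero

lemma moebiusConv_prime_pow_succ {p : ℕ} (hp : p.Prime) (k : ℕ) :
    moebiusConv f (p ^ (k + 1)) = f (p ^ (k + 1)) - f (p ^ k) := by
  rw [← sum_divisors_moebiusConv (f := f) (pow_ne_zero (k + 1) hp.ne_zero),
    ← sum_divisors_moebiusConv (f := f) (pow_ne_zero k hp.ne_zero), Nat.sum_divisors_prime_pow hp,
    Nat.sum_divisors_prime_pow hp, sum_range_succ, add_sub_cancel_left]

lemma isMultiplicative_moebiusConv (hf1 : f 1 = 1)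
    (hfmul : ∀ m n : ℕ, Nat.Coprime m n → f (m * n) = f m * f n) :
    (moebiusConv f).IsMultiplicative :=
  isMultiplicative_moebius.intCast.mul (isMultiplicative_toArithmeticFunction hf1 hfmul)

lemma abs_moebiusConv_prime_pow_le (hf1 : f 1 = 1) (hfb : ∀ n, 0 ≤ f n ∧ f n ≤ 1)
    {p : ℕ} (hp : p.Prime) (k : ℕ) : |moebiusConv f (p ^ k)| ≤ 1 := by
  cases k with
  | zero => simp [moebiusConv_one, hf1]
  | succ k =>
    rw [moebiusConv_prime_pow_succ hp, abs_sub_le_iff]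
    constructor <;> linarith [hfb (p ^ k), hfb (p ^ (k + 1))]

lemma moebiusConv_eq_zero_of_notMem_factoredNumbers {q : ℕ} (hq : 0 < q) (hf1 : f 1 = 1)
    (hfmul : ∀ m n : ℕ, Nat.Coprime m n → f (m * n) = f m * f n)
    (hfout : ∀ p k : ℕ, Nat.Prime p → ¬ p ∣ q → 1 ≤ k → f (p ^ k) = 1)
    {d : ℕ} (hd : d ∉ Nat.factoredNumbers q.primeFactors) : moebiusConv f d = 0 := by
  refine (isMultiplicative_moebiusConv hf1 hfmul).eq_zero_of_notMem_factoredNumbers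
    (fun p k hp hps hk => ?_) hd
  have hpq : ¬ p ∣ q := fun h => hps (Nat.mem_primeFactors.2 ⟨hp, h, hq.ne'⟩)
  obtain ⟨j, rfl⟩ := Nat.exists_eq_add_of_le' hk
  rw [moebiusConv_prime_pow_succ hp, hfout p _ hp hpq hk, sub_eq_zero]
  rcases j with _ | j
  · rw [pow_zero, hf1]
  · exact (hfout p _ hp hpq (Nat.succ_pos j)).symm

variable {p : ℕ}

lemma tsum_moebiusConv_prime_pow_div (hf1 : f 1 = 1) (hfb : ∀ n, 0 ≤ f n ∧ f n ≤ 1)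
    (hp : p.Prime) :
    ∑' k, moebiusConv f (p ^ k) / (p : ℝ) ^ k
      = (1 - 1 / p) * ∑' k, f (p ^ k) / (p : ℝ) ^ k := by
  set a : ℕ → ℝ := fun k => f (p ^ k) / (p : ℝ) ^ k
  have ha : Summable a := summable_div_prime_pow (fun k => abs_le.2 ⟨by linarith [hfb (p ^ k)],
    (hfb _).2⟩) hp
  have hg : Summable fun k => moebiusConv f (p ^ k) / (p : ℝ) ^ k :=
    summable_div_prime_pow (abs_moebiusConv_prime_pow_le hf1 hfb hp) hp
  have hshift (k : ℕ) :
      moebiusConv f (p ^ (k + 1)) / (p : ℝ) ^ (k + 1) = a (k + 1) - 1 / p * a k := by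
    have : (p : ℝ) ≠ 0 := mod_cast hp.ne_zero
    simp only [a]
    rw [moebiusConv_prime_pow_succ hp, pow_succ (p : ℝ)]
    field_simp
  have ha0 : a 0 = 1 := by simp [a, hf1]
  have ha1 : Summable fun k => a (k + 1) := ha.comp_injective (add_left_injective 1)
  rw [hg.tsum_eq_zero_add, ha.tsum_eq_zero_add, tsum_congr hshift,
    ha1.tsum_sub (ha.mul_left _), tsum_mul_left, ha.tsum_eq_zero_add, ha0]
  simp [moebiusConv_one, hf1]
  ring

lemma tsum_abs_moebiusConv_prime_pow_mul_le (hf1 : f 1 = 1) (hfb : ∀ n, 0 ≤ f n ∧ f n ≤ 1)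
    (hp : p.Prime) {t : ℝ} (ht0 : 0 ≤ t) (ht : t ≤ 4 / 5) :
    ∑' k, |moebiusConv f (p ^ k)| * t ^ k ≤ 1 + (1 - f p) * t + 5 * t ^ 2 := by
  have ht1 : t < 1 := by linarith
  have hbound : ∀ k, |moebiusConv f (p ^ k)| * t ^ k ≤ t ^ k := fun k =>
    mul_le_of_le_one_left (by positivity) (abs_moebiusConv_prime_pow_le hf1 hfb hp k)
  have hs : Summable fun k => |moebiusConv f (p ^ k)| * t ^ k :=
    .of_nonneg_of_le (fun k => by positivity) hbound (summable_geometric_of_lt_one ht0 ht1)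
  have htail : ∑' k, |moebiusConv f (p ^ (k + 2))| * t ^ (k + 2) ≤ 5 * t ^ 2 :=
    calc ∑' k, |moebiusConv f (p ^ (k + 2))| * t ^ (k + 2)
        ≤ ∑' k, t ^ 2 * t ^ k := by
          refine (hs.comp_injective (add_left_injective 2)).tsum_le_tsum (fun k => ?_)
            ((summable_geometric_of_lt_one ht0 ht1).mul_left _)
          rw [← pow_add, add_comm 2 k]
          exact hbound (k + 2)
      _ = t ^ 2 / (1 - t) := by
          rw [tsum_mul_left, tsum_geometric_of_lt_one ht0 ht1, div_eq_mul_inv]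
      _ ≤ 5 * t ^ 2 := by
          rw [div_le_iff₀ (by linarith)]
          nlinarith [sq_nonneg t]
  have hfirst : |moebiusConv f p| = 1 - f p := by
    have h := moebiusConv_prime_pow_succ (f := f) hp 0
    rw [zero_add, pow_one, pow_zero, hf1] at h
    rw [h, abs_sub_comm, abs_of_nonneg (by linarith [(hfb p).2])]
  rw [← hs.sum_add_tsum_nat_add 2]
  simp only [sum_range_succ, sum_range_zero, pow_zero, moebiusConv_one, hf1, hfirst, abs_one,
    mul_one, pow_one, zero_add]
  linarith

end MoebiusConv

lemma hasSum_moebiusConv_div {f : ℕ → ℝ} {q : ℕ} (hq : 0 < q) (hf1 : f 1 = 1)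
    (hfmul : ∀ m n : ℕ, Nat.Coprime m n → f (m * n) = f m * f n)
    (hfout : ∀ p k : ℕ, Nat.Prime p → ¬ p ∣ q → 1 ≤ k → f (p ^ k) = 1)
    (hfb : ∀ n, 0 ≤ f n ∧ f n ≤ 1) :
    HasSum (fun d : ℕ => moebiusConv f d / d) (Gq f q) := by
  have h := hasSum_prod_tsum_of_abs_le_rpow
    (W := fun d : ℕ => moebiusConv f d / d) (c := -1) (s := q.primeFactors)
    (by simp [moebiusConv_one, hf1])
    (fun {m n} hmn => by
      simp only [(isMultiplicative_moebiusConv hf1 hfmul).map_mul_of_coprime hmn, Nat.cast_mul,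
        mul_div_mul_comm])
    (by norm_num)
    (fun p k hp => by
      rw [rpow_neg_one, inv_eq_one_div, Nat.cast_pow]
      exact abs_div_prime_pow_le (abs_moebiusConv_prime_pow_le hf1 hfb hp k) hp k)
    (fun p hp => Nat.prime_of_mem_primeFactors hp)
    (Function.support_subset_iff'.2 fun d hd => by
      simp [moebiusConv_eq_zero_of_notMem_factoredNumbers hq hf1 hfmul hfout hd])
  convert h using 1
  refine prod_congr rfl fun p hp => ?_
  simp only [Nat.cast_pow]
  exact (tsum_moebiusConv_prime_pow_div hf1 hfb (Nat.prime_of_mem_primeFactors hp)).symm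

lemma hasSum_abs_moebiusConv_mul_rpow {f : ℕ → ℝ} {q : ℕ} (hq : 0 < q) (hf1 : f 1 = 1)
    (hfmul : ∀ m n : ℕ, Nat.Coprime m n → f (m * n) = f m * f n)
    (hfout : ∀ p k : ℕ, Nat.Prime p → ¬ p ∣ q → 1 ≤ k → f (p ^ k) = 1)
    (hfb : ∀ n, 0 ≤ f n ∧ f n ≤ 1) {c : ℝ} (hc : c < 0) :
    HasSum (fun d : ℕ => |moebiusConv f d| * (d : ℝ) ^ c)
      (∏ p ∈ q.primeFactors, ∑' k, |moebiusConv f (p ^ k)| * ((p : ℝ) ^ c) ^ k) := by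
  have hpow : ∀ p k : ℕ, ((p ^ k : ℕ) : ℝ) ^ c = ((p : ℝ) ^ c) ^ k := fun p k => by
    rw [Nat.cast_pow, rpow_pow_comm (Nat.cast_nonneg p)]
  have h := hasSum_prod_tsum_of_abs_le_rpow
    (W := fun d : ℕ => |moebiusConv f d| * (d : ℝ) ^ c) (s := q.primeFactors)
    (by simp [moebiusConv_one, hf1])
    (fun {m n} hmn => by
      simp only [(isMultiplicative_moebiusConv hf1 hfmul).map_mul_of_coprime hmn, abs_mul,
        Nat.cast_mul, mul_rpow (Nat.cast_nonneg m) (Nat.cast_nonneg n)]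
      ring)
    hc
    (fun p k hp => by
      have hpc : 0 ≤ ((p : ℝ) ^ c) ^ k := by positivity
      rw [hpow, abs_mul, abs_abs, abs_of_nonneg hpc]
      exact mul_le_of_le_one_left hpc (abs_moebiusConv_prime_pow_le hf1 hfb hp k))
    (fun p hp => Nat.prime_of_mem_primeFactors hp)
    (Function.support_subset_iff'.2 fun d hd => by
      simp [moebiusConv_eq_zero_of_notMem_factoredNumbers hq hf1 hfmul hfout hd])
  simpa only [hpow] using h

lemma hasSum_moebiusConv_mul_div_sub {f : ℕ → ℝ} {q : ℕ} (hq : 0 < q) (hf1 : f 1 = 1)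
    (hfmul : ∀ m n : ℕ, Nat.Coprime m n → f (m * n) = f m * f n)
    (hfout : ∀ p k : ℕ, Nat.Prime p → ¬ p ∣ q → 1 ≤ k → f (p ^ k) = 1)
    (hfb : ∀ n, 0 ≤ f n ∧ f n ≤ 1) (N : ℕ) :
    HasSum (fun d : ℕ => moebiusConv f d * (((N / d : ℕ) : ℝ) - (N : ℝ) / d))
      (∑ n ∈ Icc 1 N, (f n - Gq f q)) := by
  have hfloor : HasSum (fun d : ℕ => moebiusConv f d * ((N / d : ℕ) : ℝ))
      (∑ n ∈ Icc 1 N, f n) := by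
    have h := sum_Ioc_mul_zeta_eq_sum (moebiusConv f) N
    rw [moebiusConv_mul_zeta] at h
    rw [show Icc 1 N = Ioc 0 N from rfl,
      ← sum_congr rfl fun n hn => toArithmeticFunction_apply (f := f) (mem_Ioc.1 hn).1.ne', h]
    refine hasSum_sum_of_ne_finset_zero fun d hd => ?_
    rcases Nat.eq_zero_or_pos d with rfl | hd0
    · simp
    · rw [Nat.div_eq_of_lt (by simpa [hd0] using hd), Nat.cast_zero, mul_zero]
  have hG := (hasSum_moebiusConv_div hq hf1 hfmul hfout hfb).mul_left (N : ℝ)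
  have hterm : (fun d : ℕ => moebiusConv f d * (((N / d : ℕ) : ℝ) - (N : ℝ) / d))
      = fun d => moebiusConv f d * ((N / d : ℕ) : ℝ) - N * (moebiusConv f d / d) := by
    funext d; ring
  rw [sum_sub_distrib, sum_const, Nat.card_Icc, Nat.add_sub_cancel, nsmul_eq_mul, hterm]
  exact hfloor.sub hG

lemma abs_Efun_le_tsum {f : ℕ → ℝ} {q : ℕ} (hq : 0 < q) (hf1 : f 1 = 1)
    (hfmul : ∀ m n : ℕ, Nat.Coprime m n → f (m * n) = f m * f n)
    (hfout : ∀ p k : ℕ, Nat.Prime p → ¬ p ∣ q → 1 ≤ k → f (p ^ k) = 1)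
    (hfb : ∀ n, 0 ≤ f n ∧ f n ≤ 1) {z : ℝ} (hz : 0 < z) (u : ℝ)
    (hsum : Summable fun d : ℕ => |moebiusConv f d| * min (z ^ (-u)) (1 / d)) :
    |Efun f q z u| ≤ ∑' d : ℕ, |moebiusConv f d| * min (z ^ (-u)) (1 / d) := by
  have hx : 0 < z ^ u := rpow_pos_of_pos hz u
  rw [Efun, ← Real.norm_eq_abs]
  refine ((hasSum_moebiusConv_mul_div_sub hq hf1 hfmul hfout hfb ⌊z ^ u⌋₊).mul_left
    (z ^ (-u))).norm_le_of_bounded hsum.hasSum fun d => ?_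
  rw [Real.norm_eq_abs, rpow_neg hz.le, abs_mul, abs_mul, abs_of_pos (inv_pos.2 hx),
    mul_left_comm]
  exact mul_le_mul_of_nonneg_left (inv_mul_abs_floor_div_sub_le hx d) (abs_nonneg _)

lemma prod_tsum_abs_moebiusConv_le_exp {f : ℕ → ℝ} {q : ℕ} (hf1 : f 1 = 1)
    (hfb : ∀ n, 0 ≤ f n ∧ f n ≤ 1) {z ξ : ℝ} (hz : 1 < z) (hξz : 3 / 2 * ξ ≤ log z) :
    ∏ p ∈ q.primeFactors, ∑' k, |moebiusConv f (p ^ k)| * ((p : ℝ) ^ (ξ / log z - 1)) ^ k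
      ≤ exp (Hfun f q z 0 ξ + 5 * Jfun q z ξ) := by
  have hL : 0 < log z := log_pos hz
  have hc : ξ / log z - 1 ≤ -(1 / 3) := by
    have : ξ / log z ≤ 2 / 3 := by rw [div_le_iff₀ hL]; linarith
    linarith
  rw [Hfun, Jfun, mul_sum, ← sum_add_distrib, exp_sum]
  refine prod_le_prod (fun p _ => tsum_nonneg fun k => by positivity) fun p hp => ?_
  have hp := Nat.prime_of_mem_primeFactors hp
  have hp0 : (0 : ℝ) < p := mod_cast hp.pos
  set t := (p : ℝ) ^ (ξ / log z - 1)
  have ht : t = (p : ℝ) ^ (ξ / log z) / p := rpow_sub_one hp0.ne' _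
  have ht2 : t ^ 2 = (p : ℝ) ^ (2 * ξ / log z) / (p : ℝ) ^ 2 := by
    rw [ht, div_pow, ← rpow_natCast, ← rpow_mul hp0.le]
    ring_nf
  calc ∑' k, |moebiusConv f (p ^ k)| * t ^ k ≤ 1 + ((1 - f p) * t + 5 * t ^ 2) := by
        rw [← add_assoc]
        exact tsum_abs_moebiusConv_prime_pow_mul_le hf1 hfb hp (by positivity)
          (rpow_le_four_fifths (mod_cast hp.two_le) hc)
    _ ≤ exp ((1 - f p) * t + 5 * t ^ 2) := by
        linarith [add_one_le_exp ((1 - f p) * t + 5 * t ^ 2)]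
    _ = _ := by
        rw [ht2, ht]
        ring_nf

theorem statement10_general (z : ℝ) (hz : 1 < z) (q : ℕ) (f : ℕ → ℝ)
    (hq : 0 < q)
    (hf1 : f 1 = 1) (hfmul : ∀ m n : ℕ, Nat.Coprime m n → f (m * n) = f m * f n)
    (hfout : ∀ p k : ℕ, Nat.Prime p → ¬ p ∣ q → 1 ≤ k → f (p ^ k) = 1)
    (hfb : ∀ n, 0 ≤ f n ∧ f n ≤ 1)
    (ξ : ℝ) (hξ1 : 1 ≤ ξ) (hξ2 : ξ ≤ 2 / 3 * Real.log z) :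
    (∀ u : ℝ, 0 ≤ u →
      |Efun f q z u| ≤ Real.exp (Hfun f q z 0 ξ - ξ * u + 5 * Jfun q z ξ)) ∧
    ∫⁻ u in Set.Ioi (0 : ℝ), ENNReal.ofReal (Real.exp (ξ * u) * |Efun f q z u|) ≤
      ENNReal.ofReal (3 / ξ * Real.exp (Hfun f q z 0 ξ + 5 * Jfun q z ξ)) := by
  have hξ0 : 0 < ξ := by linarith
  have hL : 0 < log z := log_pos hz
  have hξz : 3 / 2 * ξ ≤ log z := by linarith
  have hS := hasSum_abs_moebiusConv_mul_rpow hq hf1 hfmul hfout hfb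
    (c := ξ / log z - 1) (by rw [sub_neg, div_lt_one hL]; linarith)
  have hSle := prod_tsum_abs_moebiusConv_le_exp (q := q) hf1 hfb hz hξz
  have hE (u : ℝ) := abs_Efun_le_tsum hq hf1 hfmul hfout hfb (by linarith) u
    (summable_abs_mul_min_rpow_neg hz hξ0.le (by linarith) hS.summable u)
  constructor
  · intro u _
    calc |Efun f q z u| ≤ _ := hE u
      _ ≤ exp (-(ξ * u)) * _ := tsum_abs_mul_min_rpow_neg_le hz hξ0.le (by linarith) hS u
      _ ≤ exp (-(ξ * u)) * exp (Hfun f q z 0 ξ + 5 * Jfun q z ξ) := by gcongr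
      _ = exp (Hfun f q z 0 ξ - ξ * u + 5 * Jfun q z ξ) := by rw [← exp_add]; ring_nf
  · calc ∫⁻ u in Set.Ioi 0, ENNReal.ofReal (exp (ξ * u) * |Efun f q z u|)
        ≤ ∫⁻ u in Set.Ioi 0, ENNReal.ofReal
            (exp (ξ * u) * ∑' d : ℕ, |moebiusConv f d| * min (z ^ (-u)) (1 / d)) :=
          lintegral_mono fun u => ENNReal.ofReal_le_ofReal (by gcongr; exact hE u)
      _ ≤ ENNReal.ofReal (3 / ξ * _) :=
          lintegral_exp_mul_tsum_abs_mul_min_rpow_neg_le hz hξ0 hξz hS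
      _ ≤ ENNReal.ofReal (3 / ξ * exp (Hfun f q z 0 ξ + 5 * Jfun q z ξ)) := by gcongr

theorem statement10 (z : ℝ) (hz : 1 < z) (q : ℕ) (f : ℕ → ℝ)
    (hq : 0 < q) (hpz : ∀ p ∈ q.primeFactors, (p : ℝ) ≤ z)
    (hf1 : f 1 = 1) (hfmul : ∀ m n : ℕ, Nat.Coprime m n → f (m * n) = f m * f n)
    (hfout : ∀ p k : ℕ, Nat.Prime p → ¬ p ∣ q → 1 ≤ k → f (p ^ k) = 1)
    (hfb : ∀ n, 0 ≤ f n ∧ f n ≤ 1)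
    (ξ : ℝ) (hξ1 : 1 ≤ ξ) (hξ2 : ξ ≤ 2 / 3 * Real.log z) :
    (∀ u : ℝ, 0 ≤ u →
      |Efun f q z u| ≤ Real.exp (Hfun f q z 0 ξ - ξ * u + 5 * Jfun q z ξ)) ∧
    ∫⁻ u in Set.Ioi (0 : ℝ), ENNReal.ofReal (Real.exp (ξ * u) * |Efun f q z u|) ≤
      ENNReal.ofReal (3 / ξ * Real.exp (Hfun f q z 0 ξ + 5 * Jfun q z ξ)) :=
  statement10_general z hz q f hq hf1 hfmul hfout hfb ξ hξ1 hξ2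
end
end
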